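/- For any Markov kernel p on a countable set V, any stack mechanism, any stack walk x_0, x_1, ..., any function f : V -> R with well-defined Laplacian, and any t: sum_{s=0}^{t-1} Delta f(x_s) = f(x_t) - f(x_0) + sum_{u,v in V} D_{n_t(u)}(u,v) [f(u) - f(v) + Delta f(u)], where D_n(u,v) := #{i <= n : u^{(i)} = v} - n p(u,v) and n_t(u) counts visits to u before time t. -/

import Mathlib

open scoped BigOperators Classical

/-- `(x, r)` is a rotor walk for the rotor mechanism `(d, succ)`.  Rotor values are
`0`-based: rotor value `j` at `u` means the rotor points to `succ u j`
(corresponding to `u^(j+1)` in `1`-based notation).  At each step the rotor at the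
current particle position is incremented cyclically and the particle moves in the
new rotor direction. -/
def IsRotorWalk {V : Type*} (d : V → ℕ) (succ : V → ℕ → V)
    (x : ℕ → V) (r : ℕ → V → ℕ) : Prop :=
  (∀ v, r 0 v < d v) ∧
  (∀ t, r (t + 1) (x t) = (r t (x t) + 1) % d (x t)) ∧
  (∀ t v, v ≠ x t → r (t + 1) v = r t v) ∧
  (∀ t, x (t + 1) = succ (x t) (r (t + 1) (x t)))

/-- the number of visits of the walk `x` to `v` strictly before time `t` -/
noncomputable def nvisits {V : Type*} (x : ℕ → V) (t : ℕ) (v : V) : ℕ :=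
  ((Finset.range t).filter fun s => x s = v).card

/-- the rotor mechanism `(d, succ)` realizes the transition kernel `p`:
`p u v` is the proportion of the `d u` successors of `u` equal to `v` -/
def Realizes {V : Type*} (d : V → ℕ) (succ : V → ℕ → V) (p : V → V → ℝ) : Prop :=
  (∀ u, 0 < d u) ∧
  ∀ u v, p u v = ((Finset.range (d u)).filter fun i => succ u i = v).card / d u

/-!
Fix `u` and put `n = n_t(u)`. The counts `#{i ≤ n : u^(i) = v}` sum to `n` over `v` and `p(u, ·)`
sums to `1`, so `D_n(u, ·)` sums to zero and, since `∑_v p(u,v) f(v) = f(u) + Δf(u)`, the `u`-row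
of the double sum is `n (f(u) + Δf(u)) - ∑_{i ≤ n} f(u^(i))`. Summed over `u`, the first terms give
`∑_{s<t} (f + Δf)(x_s)`; as the `i`-th visit to `u` is followed by a step to `u^(i)`, the second
terms give `∑_{s<t} f(x_{s+1})`. What remains is a telescoping sum.
-/

/-- `D_n(u,v)` of the paper, for the stack `σ = stack u` and the row `q = p u`. -/
noncomputable def discrepancy {V : Type*} (σ : ℕ → V) (q : V → ℝ) (n : ℕ) (v : V) : ℝ :=
  (((Finset.Icc 1 n).filter fun i => σ i = v).card : ℝ) - n * q v

open Finset

section Discrepancy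

variable {V : Type*} (σ : ℕ → V) {q : V → ℝ} (n : ℕ)

lemma discrepancy_eq_zero_of_notMem {v : V} (hσ : v ∉ (Icc 1 n).image σ) (hq : q v = 0) :
    discrepancy σ q n v = 0 := by
  have : (Icc 1 n).filter (fun i => σ i = v) = ∅ :=
    filter_eq_empty_iff.2 fun i hi hiv => hσ (mem_image.2 ⟨i, hi, hiv⟩)
  simp [discrepancy, this, hq]

lemma finite_support_discrepancy (hq : q.support.Finite) :
    (Function.support (discrepancy σ q n)).Finite :=
  (((Icc 1 n).image σ).finite_toSet.union hq).subset fun v hv => by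
    by_contra h
    simp only [Set.mem_union, not_or, mem_coe, Function.mem_support, not_not] at h
    exact hv (discrepancy_eq_zero_of_notMem σ n h.1 h.2)

lemma tsum_discrepancy_mul (hq : HasSum q 1) (hfin : q.support.Finite) (f : V → ℝ) (a : ℝ) :
    ∑' v, discrepancy σ q n v * (a - f v) = n * (∑' v, q v * f v) - ∑ i ∈ Icc 1 n, f (σ i) := by
  set T := (Icc 1 n).image σ ∪ hfin.toFinset
  have hσT : ∀ i ∈ Icc 1 n, σ i ∈ T := fun i hi => mem_union_left _ (mem_image_of_mem σ hi)
  have hqT : ∀ v ∉ T, q v = 0 := fun v hv => by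
    simpa using fun h => hv (mem_union_right _ (hfin.mem_toFinset.2 h))
  have hsum_q : ∑ v ∈ T, q v = 1 := (hq.unique (hasSum_sum_of_ne_finset_zero hqT)).symm
  have hcount : ∑ v ∈ T, (((Icc 1 n).filter fun i => σ i = v).card : ℝ) = n := by
    rw [← Nat.cast_sum, ← card_eq_sum_card_fiberwise hσT, Nat.card_Icc, Nat.add_sub_cancel]
  have hcount_mul : ∑ v ∈ T, (((Icc 1 n).filter fun i => σ i = v).card : ℝ) * f v
      = ∑ i ∈ Icc 1 n, f (σ i) := by
    simp_rw [← nsmul_eq_mul, ← sum_const]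
    exact sum_fiberwise_of_maps_to' hσT f
  rw [tsum_eq_sum (s := T) fun v hv => by
        rw [discrepancy_eq_zero_of_notMem σ n (fun h => hv (mem_union_left _ h)) (hqT v hv),
          zero_mul],
    tsum_eq_sum (s := T) fun v hv => by rw [hqT v hv, zero_mul]]
  simp only [discrepancy, sub_mul, mul_sub, sum_sub_distrib, ← sum_mul, mul_assoc, ← mul_sum,
    hcount, hcount_mul, hsum_q]
  ring

end Discrepancy

lemma tsum_prod_eq_sum_tsum {α β M : Type*} [AddCommMonoid M] [TopologicalSpace M]
    {G : α × β → M} (S : Finset α) (hS : ∀ u ∉ S, ∀ v, G (u, v) = 0)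
    (hfin : ∀ u, (Function.support fun v => G (u, v)).Finite) :
    ∑' uv, G uv = ∑ u ∈ S, ∑' v, G (u, v) := by
  classical
  set T := S.biUnion fun u => (hfin u).toFinset
  have hT : ∀ u ∈ S, ∀ v ∉ T, G (u, v) = 0 := fun u hu v hv => by
    simpa using fun h => hv (mem_biUnion.2 ⟨u, hu, (hfin u).mem_toFinset.2 h⟩)
  rw [tsum_eq_sum (s := S ×ˢ T) fun uv huv => ?_, sum_product]
  · exact sum_congr rfl fun u hu => (tsum_eq_sum (hT u hu)).symm
  · by_cases hu : uv.1 ∈ S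
    · exact hT uv.1 hu uv.2 fun hv => huv (mem_product.2 ⟨hu, hv⟩)
    · exact hS uv.1 hu uv.2

section Visits

variable {V : Type*} (x : ℕ → V)

lemma nvisits_succ (t : ℕ) (v : V) :
    nvisits x (t + 1) v = nvisits x t v + if x t = v then 1 else 0 := by
  unfold nvisits
  rw [range_add_one, filter_insert]
  split_ifs
  · rw [card_insert_of_notMem (by simp)]
  · rfl

lemma nvisits_eq_zero_of_notMem {t : ℕ} {v : V} (hv : v ∉ (range t).image x) :
    nvisits x t v = 0 :=
  card_eq_zero.2 <| filter_eq_empty_iff.2 fun s hs hxs => hv (mem_image.2 ⟨s, hs, hxs⟩)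

lemma sum_sum_Icc_nvisits {M : Type*} [AddCommMonoid M] (F : V → ℕ → M) (S : Finset V) :
    ∀ t, (∀ s < t, x s ∈ S) →
      ∑ u ∈ S, ∑ i ∈ Icc 1 (nvisits x t u), F u i =
        ∑ s ∈ range t, F (x s) (nvisits x s (x s) + 1)
  | 0, _ => by simp [nvisits]
  | t + 1, hS => by
    have hstep : ∀ u, ∑ i ∈ Icc 1 (nvisits x (t + 1) u), F u i =
        ∑ i ∈ Icc 1 (nvisits x t u), F u i + if x t = u then F u (nvisits x t u + 1) else 0 := by
      intro u
      rw [nvisits_succ]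
      split_ifs
      · exact sum_Icc_succ_top (by omega) _
      · simp
    rw [sum_range_succ, ← sum_sum_Icc_nvisits F S t fun s hs => hS s (by omega)]
    simp only [hstep, sum_add_distrib, sum_ite_eq, if_pos (hS t (by omega))]

end Visits

theorem stack_key_identity_general {V : Type*}
    (p : V → V → ℝ) (hrow : ∀ u, HasSum (p u) 1)
    (hfin : ∀ u, (Function.support (p u)).Finite)
    (stack : V → ℕ → V)
    (x : ℕ → V) (hx : ∀ t, x (t + 1) = stack (x t) (nvisits x t (x t) + 1))
    (f : V → ℝ) (Δ : V → ℝ) (hΔ : ∀ u, Δ u = (∑' v, p u v * f v) - f u)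
    (t : ℕ) :
    ∑ s ∈ Finset.range t, Δ (x s) =
      f (x t) - f (x 0) +
        ∑' uv : V × V,
          (((((Finset.Icc 1 (nvisits x t uv.1)).filter
                fun i => stack uv.1 i = uv.2).card : ℝ)
              - (nvisits x t uv.1 : ℝ) * p uv.1 uv.2) *
            (f uv.1 - f uv.2 + Δ uv.1)) := by
  set S := (range t).image x
  have hS : ∀ s < t, x s ∈ S := fun s hs => mem_image_of_mem x (mem_range.2 hs)
  have hrow_sum : ∀ u, ∑' v, discrepancy (stack u) (p u) (nvisits x t u) v * (f u - f v + Δ u) =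
      ∑ i ∈ Icc 1 (nvisits x t u), (f u + Δ u - f (stack u i)) := by
    intro u
    have hmean : ∑' v, p u v * f v = f u + Δ u := by rw [hΔ]; ring
    simp only [sub_add_eq_add_sub, tsum_discrepancy_mul _ _ (hrow u) (hfin u), hmean,
      sum_sub_distrib, sum_const, Nat.card_Icc, Nat.add_sub_cancel, nsmul_eq_mul]
  have hsupp : ∀ u ∉ S, ∀ v, discrepancy (stack u) (p u) (nvisits x t u) v *
      (f u - f v + Δ u) = 0 := fun u hu v => by
    simp [discrepancy, nvisits_eq_zero_of_notMem x hu]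
  have hfin_row : ∀ u, (Function.support fun v =>
      discrepancy (stack u) (p u) (nvisits x t u) v * (f u - f v + Δ u)).Finite := fun u =>
    (finite_support_discrepancy _ _ (hfin u)).subset (Function.support_mul_subset_left _ _)
  change _ = _ + ∑' uv : V × V, discrepancy (stack uv.1) (p uv.1) (nvisits x t uv.1) uv.2 *
    (f uv.1 - f uv.2 + Δ uv.1)
  rw [tsum_prod_eq_sum_tsum S hsupp hfin_row, sum_congr rfl fun u _ => hrow_sum u,
    sum_sum_Icc_nvisits x (fun u i => f u + Δ u - f (stack u i)) S t hS]
  simp only [← hx, sum_sub_distrib, sum_add_distrib]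
  have htelescope := sum_range_sub (fun s => f (x s)) t
  rw [sum_sub_distrib] at htelescope
  linarith

/-- Proposition `stack-key`: the exact summation identity for stack walks.  The stack
mechanism assigns to each `u` an infinite sequence of successors `stack u 1, stack u 2, …`,
and the stack walk moves from `x_t` to the `(n_t(x_t)+1)`-st stacked successor of `x_t`.
`D_n(u,v) = #\{i ≤ n : u^{(i)} = v\} - n p(u,v)`. -/
theorem stack_key_identity {V : Type*} [Countable V]
    (p : V → V → ℝ) (hpos : ∀ u v, 0 ≤ p u v) (hrow : ∀ u, HasSum (p u) 1)
    (hfin : ∀ u, (Function.support (p u)).Finite)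
    (stack : V → ℕ → V)
    (x : ℕ → V) (hx : ∀ t, x (t + 1) = stack (x t) (nvisits x t (x t) + 1))
    (f : V → ℝ) (Δ : V → ℝ) (hΔ : ∀ u, Δ u = (∑' v, p u v * f v) - f u)
    (t : ℕ) :
    ∑ s ∈ Finset.range t, Δ (x s) =
      f (x t) - f (x 0) +
        ∑' uv : V × V,
          (((((Finset.Icc 1 (nvisits x t uv.1)).filter
                fun i => stack uv.1 i = uv.2).card : ℝ)
              - (nvisits x t uv.1 : ℝ) * p uv.1 uv.2) *
            (f uv.1 - f uv.2 + Δ uv.1)) :=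
  stack_key_identity_general p hrow hfin stack x hx f Δ hΔ t
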